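/- arXiv:2507.18814 — 5 statements merged into one kernel-verified Lean document; each statement's English description precedes it below -/
import Mathlib

section
/- Let H^{(m)} = Σ W^{y_1…y_m}_{x_1…x_m} a†_{x_1}⋯a†_{x_m} a_{y_m}⋯a_{y_1} be a self-adjoint m-body operator on Fock space, and let H^{(m)}_n denote its restriction to the n-particle sector. Then for all n ≥ m, H^{(m)}_{n+1} = (1/(n+1−m)) Σ_{x∈Λ} a_x† H^{(m)}_n a_x (as operators on the (n+1)-particle sector). -/
/-!
(Anti)commuting `a†_z` to the left through the `m` creation operators and `a_z` to the right
through the `m` annihilation operators of a monomial `A† B` produces the sign `(-ε)ᵐ` twice, so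
`∑_z a†_z A† B a_z = A† N B` with `N = ∑_z a†_z a_z`. On the `(n+1)`-particle sector `B` maps into
the `(n+1-m)`-particle sector, where `N` is the scalar `n+1-m`; by linearity the same holds for
`Hm`. Finally `a_z` maps the `(n+1)`-particle sector into the `n`-particle one, so `Q n` can be
dropped from `Hm * Q n`.
-/

open ContinuousLinearMap

theorem list_prod_mul_eq_mul_list_prod_mul {M : Type*} [Monoid M] {Q : ℕ → M}
    (hQ : ∀ k, IsIdempotentElem (Q k)) :
    ∀ L : List M, (∀ b ∈ L, ∀ k, b * Q (k + 1) = Q k * (b * Q (k + 1))) →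
      ∀ k, L.prod * Q (k + L.length) = Q k * (L.prod * Q (k + L.length))
  | [], _, k => by simp [(hQ k).eq]
  | b :: L, h, k => by
    have hL := list_prod_mul_eq_mul_list_prod_mul hQ L
      (fun b' hb' => h b' (List.mem_cons_of_mem _ hb')) (k + 1)
    have hb := h b List.mem_cons_self k
    rw [List.length_cons, add_comm L.length 1, ← add_assoc, List.prod_cons]
    calc b * L.prod * Q (k + 1 + L.length)
        = b * Q (k + 1) * (L.prod * Q (k + 1 + L.length)) := by
          rw [mul_assoc, mul_assoc b (Q _), ← hL]
      _ = Q k * (b * L.prod * Q (k + 1 + L.length)) := by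
        rw [hb, mul_assoc, mul_assoc, ← hL, mul_assoc]

section Algebra

variable {R A : Type*} [CommSemiring R] [Semiring A] [Algebra R A]

theorem mul_list_prod_eq_pow_smul {c : R} {x : A} :
    ∀ L : List A, (∀ y ∈ L, x * y = c • (y * x)) → x * L.prod = c ^ L.length • (L.prod * x)
  | [], _ => by simp
  | y :: L, h => by
    rw [List.prod_cons, ← mul_assoc, h y List.mem_cons_self, smul_mul_assoc, mul_assoc,
      mul_list_prod_eq_pow_smul L fun z hz => h z (List.mem_cons_of_mem _ hz), mul_smul_comm,
      smul_smul, List.length_cons, pow_succ', mul_assoc]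

theorem list_prod_mul_eq_pow_smul {c : R} {x : A} :
    ∀ L : List A, (∀ y ∈ L, y * x = c • (x * y)) → L.prod * x = c ^ L.length • (x * L.prod)
  | [], _ => by simp
  | y :: L, h => by
    rw [List.prod_cons, mul_assoc,
      list_prod_mul_eq_pow_smul L fun z hz => h z (List.mem_cons_of_mem _ hz), mul_smul_comm,
      ← mul_assoc, h y List.mem_cons_self, smul_mul_assoc, smul_smul, List.length_cons,
      pow_succ, mul_assoc]

variable {ι : Type*} [Fintype ι]

theorem sum_mul_list_prod_mul_list_prod_mul (u v : ι → A) {c d : R} {C B : List A}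
    (hC : ∀ z, ∀ y ∈ C, u z * y = c • (y * u z))
    (hB : ∀ z, ∀ y ∈ B, y * v z = d • (v z * y)) (hcd : c ^ C.length * d ^ B.length = 1) :
    ∑ z, u z * (C.prod * B.prod) * v z = C.prod * (∑ z, u z * v z) * B.prod := by
  rw [Finset.mul_sum, Finset.sum_mul]
  refine Finset.sum_congr rfl fun z _ => ?_
  calc u z * (C.prod * B.prod) * v z = (u z * C.prod) * (B.prod * v z) := by
        simp only [mul_assoc]
    _ = (c ^ C.length * d ^ B.length) • (C.prod * (u z * v z) * B.prod) := by
        rw [mul_list_prod_eq_pow_smul C (hC z), list_prod_mul_eq_pow_smul B (hB z),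
          smul_mul_smul_comm]
        simp only [mul_assoc]
    _ = C.prod * (u z * v z) * B.prod := by rw [hcd, one_smul]

/-- For `u = a†` and `v = a`, `X ↦ ∑ z, u z * X * v z` is the map `H ↦ ∑ₓ a†ₓ H aₓ` of the
recursion. -/
def sandwichEigenOn (u v : ι → A) (P : A) (r : R) : Submodule R A where
  carrier := {X | ∑ z, u z * X * v z * P = r • (X * P)}
  zero_mem' := by simp
  add_mem' := by
    intro X Y hX hY
    simp only [Set.mem_ofPred_eq, mul_add, add_mul, Finset.sum_add_distrib, smul_add] at *
    rw [hX, hY]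
  smul_mem' := by
    intro t X hX
    simp only [Set.mem_ofPred_eq, mul_smul_comm, smul_mul_assoc, ← Finset.smul_sum] at *
    rw [hX, smul_comm]

theorem mem_sandwichEigenOn {u v : ι → A} {P : A} {r : R} {X : A} :
    X ∈ sandwichEigenOn u v P r ↔ ∑ z, u z * X * v z * P = r • (X * P) := Iff.rfl

theorem list_prod_mul_list_prod_mem_sandwichEigenOn {u v : ι → A} {Q : ℕ → A}
    (hQ : ∀ k, IsIdempotentElem (Q k)) (hN : ∀ k, (∑ z, u z * v z) * Q k = (k : R) • Q k) {c d : R} {C B : List A}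
    (hC : ∀ z, ∀ y ∈ C, u z * y = c • (y * u z)) (hB : ∀ z, ∀ y ∈ B, y * v z = d • (v z * y))
    (hcd : c ^ C.length * d ^ B.length = 1)
    (hBQ : ∀ b ∈ B, ∀ k, b * Q (k + 1) = Q k * (b * Q (k + 1))) (j : ℕ) :
    C.prod * B.prod ∈ sandwichEigenOn u v (Q (j + B.length)) (j : R) := by
  have hBj := list_prod_mul_eq_mul_list_prod_mul hQ B hBQ j
  rw [mem_sandwichEigenOn, ← Finset.sum_mul, sum_mul_list_prod_mul_list_prod_mul u v hC hB hcd]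
  calc C.prod * (∑ z, u z * v z) * B.prod * Q (j + B.length)
      = C.prod * ((∑ z, u z * v z) * Q j * (B.prod * Q (j + B.length))) := by
        rw [mul_assoc _ (Q j), ← hBj]; simp only [mul_assoc]
    _ = (j : R) • (C.prod * B.prod * Q (j + B.length)) := by
        rw [hN, smul_mul_assoc, ← hBj, mul_smul_comm, mul_assoc]

end Algebra

theorem star_mul_star_eq_smul {R A : Type*} [CommSemiring R] [StarRing R] [Semiring A]
    [StarRing A] [Module R A] [StarModule R A] {c : R} (hc : star c = c) {x y : A}
    (h : x * y = c • (y * x)) : star y * star x = c • (star x * star y) := by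
  rw [← star_mul, h, star_smul, star_mul, hc]

theorem mbody_sector_recursion_general
    {E : Type*} [NormedAddCommGroup E] [InnerProductSpace ℂ E] [CompleteSpace E]
    {Λ : Type*} [Fintype Λ]
    (a : Λ → E →L[ℂ] E) (ε : ℂ) (hε : ε = 1 ∨ ε = -1)
    (hccr' : ∀ x y, a x * a y + ε • (a y * a x) = 0)
    (Q : ℕ → E →L[ℂ] E)
    (hQproj : ∀ k, IsIdempotentElem (Q k))
    (hNQ : ∀ k, (∑ x, adjoint (a x) * a x) * Q k = (k : ℂ) • Q k)
    (hQa : ∀ k x, a x * Q (k + 1) = Q k * (a x * Q (k + 1)))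
    (m : ℕ) (W : (Fin m → Λ) → (Fin m → Λ) → ℂ) (Hm : E →L[ℂ] E)
    (hHm : Hm = ∑ x : Fin m → Λ, ∑ y : Fin m → Λ, W x y •
        ((List.ofFn fun i => adjoint (a (x i))).prod *
          ((List.ofFn fun i => a (y i)).reverse).prod))
    (n : ℕ) (hn : m ≤ n) :
    Hm * Q (n + 1)
      = ((n : ℂ) + 1 - (m : ℂ))⁻¹ •
          ((∑ x, adjoint (a x) * (Hm * Q n) * a x) * Q (n + 1)) := by
  obtain ⟨k, rfl⟩ := Nat.exists_eq_add_of_le hn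
  have hεε : (-ε) ^ m * (-ε) ^ m = 1 := by rcases hε with rfl | rfl <;> simp [← mul_pow]
  have hann : ∀ x y, a x * a y = (-ε) • (a y * a x) := fun x y => by
    rw [neg_smul, ← eq_neg_of_add_eq_zero_left (hccr' x y)]
  have hcre : ∀ x y, adjoint (a x) * adjoint (a y) = (-ε) • (adjoint (a y) * adjoint (a x)) :=
    fun x y => by
      have hstar : star (-ε) = -ε := by rcases hε with rfl | rfl <;> simp
      simpa only [star_eq_adjoint] using star_mul_star_eq_smul hstar (hann y x)
  have hHm_mem :
      Hm ∈ sandwichEigenOn (fun z => adjoint (a z)) a (Q (k + 1 + m)) ((k + 1 : ℕ) : ℂ) := by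
    rw [hHm]
    refine Submodule.sum_mem _ fun x _ => Submodule.sum_mem _ fun y _ => Submodule.smul_mem _ _ ?_
    have hmem_reverse {P : (E →L[ℂ] E) → Prop} (hP : ∀ i, P (a (y i))) :
        ∀ b ∈ (List.ofFn fun i => a (y i)).reverse, P b :=
      fun b hb => List.forall_mem_ofFn_iff.2 hP b (List.mem_reverse.1 hb)
    simpa using list_prod_mul_list_prod_mem_sandwichEigenOn hQproj hNQ
      (fun z => List.forall_mem_ofFn_iff.2 fun i => hcre z (x i))
      (fun z => hmem_reverse fun i => hann (y i) z) (by simpa using hεε)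
      (hmem_reverse fun i k => hQa k (y i)) (k + 1)
  have hsandwich : (∑ x, adjoint (a x) * (Hm * Q (m + k)) * a x) * Q (m + k + 1)
      = ∑ x, adjoint (a x) * Hm * a x * Q (m + k + 1) := by
    rw [Finset.sum_mul]
    refine Finset.sum_congr rfl fun x _ => ?_
    simp only [mul_assoc]
    rw [← hQa]
  have hk : ((m + k : ℕ) : ℂ) + 1 - (m : ℂ) = ((k + 1 : ℕ) : ℂ) := by push_cast; ring
  rw [hsandwich, hk, show m + k + 1 = k + 1 + m by ring, (mem_sandwichEigenOn).1 hHm_mem,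
    smul_smul, inv_mul_cancel₀ (Nat.cast_ne_zero.2 k.succ_ne_zero), one_smul]

/-- **Recursion for `m`-body Hamiltonians between particle sectors.**
Let `Hm = ∑ W^{y}_{x} a†_{x₁}⋯a†_{xₘ} a_{yₘ}⋯a_{y₁}` be a self-adjoint `m`-body operator
on the fermionic (`ε = 1`) or bosonic (`ε = -1`) Fock space over `ℓ²(Λ)` and let `Q n` be the
orthogonal projection onto the `n`-particle sector (the `n`-eigenprojection of the number
operator).  Then for all `n ≥ m`, as operators on the `(n+1)`-particle sector,
`H_{n+1} = (n+1−m)⁻¹ ∑ₓ a x† H_n (a x)`. -/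
theorem mbody_sector_recursion
    {E : Type*} [NormedAddCommGroup E] [InnerProductSpace ℂ E] [CompleteSpace E]
    {Λ : Type*} [Fintype Λ] [DecidableEq Λ]
    (a : Λ → E →L[ℂ] E) (ε : ℂ) (hε : ε = 1 ∨ ε = -1)
    (hccr : ∀ x y, a x * adjoint (a y) + ε • (adjoint (a y) * a x)
        = if x = y then (1 : E →L[ℂ] E) else 0)
    (hccr' : ∀ x y, a x * a y + ε • (a y * a x) = 0)
    (Q : ℕ → E →L[ℂ] E)
    (hQproj : ∀ k, IsIdempotentElem (Q k)) (hQsa : ∀ k, IsSelfAdjoint (Q k))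
    (hNQ : ∀ k, (∑ x, adjoint (a x) * a x) * Q k = (k : ℂ) • Q k)
    (hQa : ∀ k x, a x * Q (k + 1) = Q k * (a x * Q (k + 1)))
    (m : ℕ) (W : (Fin m → Λ) → (Fin m → Λ) → ℂ) (Hm : E →L[ℂ] E)
    (hHm : Hm = ∑ x : Fin m → Λ, ∑ y : Fin m → Λ, W x y •
        ((List.ofFn fun i => adjoint (a (x i))).prod *
          ((List.ofFn fun i => a (y i)).reverse).prod))
    (hsa : IsSelfAdjoint Hm)
    (n : ℕ) (hn : m ≤ n) :
    Hm * Q (n + 1)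
      = ((n : ℂ) + 1 - (m : ℂ))⁻¹ •
          ((∑ x, adjoint (a x) * (Hm * Q n) * a x) * Q (n + 1)) :=
  mbody_sector_recursion_general a ε hε hccr' Q hQproj hNQ hQa m W Hm hHm n hn
end

section
/- (Key Lemma) Let H = Σ_{m=m_0}^{m_1} H^{(m)} be a sum of self-adjoint m-body operators with H^{(m)} ≥ 0 for all m > m_0. Then for all n ≥ m_1, the (n+1)-particle restriction satisfies H_{n+1} ≥ (1/(n+1−m_0)) Σ_{x∈Λ} a_x† H_n a_x. -/
/-!
For an `m`-body monomial `X = a†_{x₁} ⋯ a†_{xₘ} a_{yₘ} ⋯ a_{y₁}` the canonical relations give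
`∑ₓ a†ₓ X aₓ = X (N - m)`: moving `a†ₓ` and `aₓ` inwards past one creator and one annihilator
costs a factor `ε² = 1`, and `N a_y = a_y (N - 1)` lowers the shift by one per layer.
Since `aₓ` maps the `(n+1)`-particle sector into the `n`-particle sector, this turns
`Q_{n+1} ∑ₓ a†ₓ H Qₙ aₓ Q_{n+1}` into `∑ₘ (n + 1 - m) Q_{n+1} H⁽ᵐ⁾ Q_{n+1}`, so the operator in
question is `∑ₘ (m - m₀)/(n + 1 - m₀) · Q_{n+1} H⁽ᵐ⁾ Q_{n+1}`: a nonnegative combination of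
positive operators in which the possibly indefinite `m₀`-body term has coefficient zero.
-/

open ContinuousLinearMap

section CanonicalRelations

variable {R A Λ : Type*} [CommRing R] [Ring A] [Algebra R A] [Fintype Λ]

def numberOp (c d : Λ → A) : A := ∑ z, c z * d z

variable (R) in
def IsBodyOperator (c d : Λ → A) (m : ℕ) (X : A) : Prop :=
  ∃ W : (Fin m → Λ) → (Fin m → Λ) → R, X = ∑ x : Fin m → Λ, ∑ y : Fin m → Λ, W x y •
    ((List.ofFn fun i => c (x i)).prod * ((List.ofFn fun i => d (y i)).reverse).prod)

variable [DecidableEq Λ]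

/-- `ε = 1` gives the canonical anticommutation relations, `ε = -1` the commutation relations. -/
structure SatisfiesCanonicalRelations (ε : R) (c d : Λ → A) : Prop where
  sign_mul_self : ε * ε = 1
  annihilation_creation : ∀ x y, d x * c y + ε • (c y * d x) = if x = y then 1 else 0
  creation_creation : ∀ x y, c x * c y + ε • (c y * c x) = 0
  annihilation_annihilation : ∀ x y, d x * d y + ε • (d y * d x) = 0

variable {c d : Λ → A} {ε : R}

lemma numberOp_mul_annihilation
    (hcd : ∀ x y, d x * c y + ε • (c y * d x) = if x = y then 1 else 0)
    (hdd : ∀ x y, d x * d y + ε • (d y * d x) = 0) (x : Λ) :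
    numberOp c d * d x = d x * (numberOp c d - 1) := by
  have key : ∀ z, c z * d z * d x = d x * (c z * d z) - if x = z then d z else 0 := by
    intro z
    have hzx : d z * d x = -(ε • (d x * d z)) := eq_neg_of_add_eq_zero_left (hdd z x)
    have hxz : ε • (c z * d x) = (if x = z then 1 else 0) - d x * c z :=
      eq_sub_of_add_eq' (hcd x z)
    calc c z * d z * d x = -((ε • (c z * d x)) * d z) := by
          rw [mul_assoc, hzx, mul_neg, smul_mul_assoc, mul_smul_comm, mul_assoc]
      _ = d x * (c z * d z) - if x = z then d z else 0 := by
          rw [hxz]; split_ifs <;> simp [sub_mul, mul_assoc]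
  simp only [numberOp, Finset.sum_mul, Finset.mul_sum, key, Finset.sum_sub_distrib, mul_sub,
    mul_one, Finset.sum_ite_eq, Finset.mem_univ, if_true]

lemma SatisfiesCanonicalRelations.sum_conj_creation_mul_annihilation
    (h : SatisfiesCanonicalRelations ε c d) {X : A} {k : ℕ}
    (hX : ∑ z, c z * X * d z = X * (numberOp c d - k)) (x y : Λ) :
    ∑ z, c z * (c x * X * d y) * d z = c x * X * d y * (numberOp c d - (k + 1 : ℕ)) := by
  have swap : ∀ z, c z * (c x * X * d y) * d z = c x * (c z * X * d z) * d y := by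
    intro z
    rw [show c z * (c x * X * d y) * d z = (c z * c x) * X * (d y * d z) by simp only [mul_assoc],
      eq_neg_of_add_eq_zero_left (h.creation_creation z x),
      eq_neg_of_add_eq_zero_left (h.annihilation_annihilation y z)]
    simp only [neg_mul, mul_neg, smul_mul_assoc, mul_smul_comm, smul_neg, neg_neg, smul_smul,
      h.sign_mul_self, one_smul, mul_assoc]
  have hN : (numberOp c d - k) * d y = d y * (numberOp c d - (k + 1 : ℕ)) := by
    rw [sub_mul, numberOp_mul_annihilation h.annihilation_creation h.annihilation_annihilation,
      (Nat.cast_commute k (d y)).eq]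
    push_cast
    noncomm_ring
  rw [Finset.sum_congr rfl fun z _ => swap z, ← Finset.sum_mul, ← Finset.mul_sum, hX]
  simp only [mul_assoc, hN]

lemma SatisfiesCanonicalRelations.sum_conj_monomial (h : SatisfiesCanonicalRelations ε c d)
    (m : ℕ) (x y : Fin m → Λ) :
    ∑ z, c z * ((List.ofFn fun i => c (x i)).prod * ((List.ofFn fun i => d (y i)).reverse).prod)
        * d z
      = (List.ofFn fun i => c (x i)).prod * ((List.ofFn fun i => d (y i)).reverse).prod
        * (numberOp c d - m) := by
  induction m with
  | zero => simp [numberOp]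
  | succ m ih =>
    have hsplit : (List.ofFn fun i => c (x i)).prod * ((List.ofFn fun i => d (y i)).reverse).prod
        = c (x 0) * ((List.ofFn fun i : Fin m => c (x i.succ)).prod *
            ((List.ofFn fun i : Fin m => d (y i.succ)).reverse).prod) * d (y 0) := by
      simp only [List.ofFn_succ, List.prod_cons, List.reverse_cons, List.prod_append,
        List.prod_nil, mul_one, mul_assoc]
    rw [hsplit]
    exact h.sum_conj_creation_mul_annihilation (ih _ _) _ _

lemma IsBodyOperator.sum_conj {m : ℕ} {X : A} (hX : IsBodyOperator R c d m X)
    (h : SatisfiesCanonicalRelations ε c d) :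
    ∑ z, c z * X * d z = X * (numberOp c d - m) := by
  obtain ⟨W, rfl⟩ := hX
  simp only [Finset.mul_sum, Finset.sum_mul, mul_smul_comm, smul_mul_assoc]
  rw [Finset.sum_comm]
  refine Finset.sum_congr rfl fun x _ => ?_
  rw [Finset.sum_comm]
  simp only [← Finset.smul_sum, h.sum_conj_monomial]

end CanonicalRelations

lemma mul_sum_conj_mul_eq_sum_smul {R A Λ : Type*} [CommRing R] [Ring A] [Algebra R A]
    [Fintype Λ] {c d : Λ → A} (s : Finset ℕ) (X : ℕ → A) {N P P' : A} {r : R}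
    (hX : ∀ m ∈ s, ∑ z, c z * X m * d z = X m * (N - m))
    (hd : ∀ z, d z * P = P' * (d z * P)) (hNP : N * P = r • P) :
    P * (∑ z, c z * ((∑ m ∈ s, X m) * P') * d z) * P
      = ∑ m ∈ s, (r - m) • (P * X m * P) := by
  have hdrop : ∀ z, c z * ((∑ m ∈ s, X m) * P') * d z * P = c z * (∑ m ∈ s, X m) * d z * P := by
    intro z
    simp only [mul_assoc, ← hd]
  have hshift : ∀ m : ℕ, (N - m) * P = (r - m) • P := by
    intro m
    rw [sub_mul, hNP, sub_smul, Nat.cast_smul_eq_nsmul, nsmul_eq_mul]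
  rw [mul_assoc, Finset.sum_mul, Finset.sum_congr rfl fun z _ => hdrop z, ← Finset.sum_mul]
  simp only [Finset.mul_sum, Finset.sum_mul]
  rw [Finset.sum_comm]
  refine Finset.sum_congr rfl fun m hm => ?_
  rw [← Finset.mul_sum, ← Finset.sum_mul, hX m hm, mul_assoc, hshift, mul_smul_comm,
    mul_smul_comm, mul_assoc]

section Operators

variable {E : Type*} [NormedAddCommGroup E] [InnerProductSpace ℂ E] [CompleteSpace E]

lemma satisfiesCanonicalRelations_adjoint {Λ : Type*} [DecidableEq Λ] (a : Λ → E →L[ℂ] E)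
    {ε : ℂ} (hε : ε = 1 ∨ ε = -1)
    (hccr : ∀ x y, a x * adjoint (a y) + ε • (adjoint (a y) * a x)
        = if x = y then (1 : E →L[ℂ] E) else 0)
    (hccr' : ∀ x y, a x * a y + ε • (a y * a x) = 0) :
    SatisfiesCanonicalRelations ε (fun x => adjoint (a x)) a where
  sign_mul_self := by rcases hε with rfl | rfl <;> norm_num
  annihilation_creation := hccr
  creation_creation x y := by
    have hstar : star ε = ε := by rcases hε with rfl | rfl <;> simp
    have h := congrArg star (hccr' y x)
    rw [star_add, star_smul, star_mul, star_mul, hstar, star_zero] at h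
    simpa only [star_eq_adjoint] using h
  annihilation_annihilation := hccr'

lemma ContinuousLinearMap.IsPositive.mul_mul_of_isSelfAdjoint {T Q : E →L[ℂ] E} (hT : T.IsPositive)
    (hQ : IsSelfAdjoint Q) : (Q * T * Q).IsPositive := by
  have h := hT.conj_adjoint Q
  rwa [hQ.adjoint_eq, ← mul_def, ← mul_def, ← mul_assoc] at h

end Operators

open ComplexOrder in
lemma one_sub_inv_mul_nonneg {m₀ m n : ℕ} (hm₀ : m₀ ≤ m) (hm : m ≤ n) :
    0 ≤ 1 - ((n : ℂ) + 1 - m₀)⁻¹ * (((n + 1 : ℕ) : ℂ) - m) := by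
  have hreal : (0 : ℝ) ≤ 1 - ((n : ℝ) + 1 - m₀)⁻¹ * ((n : ℝ) + 1 - m) := by
    have hm₀' : (m₀ : ℝ) ≤ m := by exact_mod_cast hm₀
    have hm' : (m : ℝ) ≤ n := by exact_mod_cast hm
    rw [sub_nonneg, inv_mul_le_one₀ (by linarith)]
    linarith
  have hcast : 1 - ((n : ℂ) + 1 - m₀)⁻¹ * (((n + 1 : ℕ) : ℂ) - m)
      = ((1 - ((n : ℝ) + 1 - m₀)⁻¹ * ((n : ℝ) + 1 - m) : ℝ) : ℂ) := by
    push_cast; ring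
  rw [hcast]
  exact Complex.zero_le_real.mpr hreal

theorem key_lemma_general
    {E : Type*} [NormedAddCommGroup E] [InnerProductSpace ℂ E] [CompleteSpace E]
    {Λ : Type*} [Fintype Λ] [DecidableEq Λ]
    (a : Λ → E →L[ℂ] E) (ε : ℂ) (hε : ε = 1 ∨ ε = -1)
    (hccr : ∀ x y, a x * adjoint (a y) + ε • (adjoint (a y) * a x)
        = if x = y then (1 : E →L[ℂ] E) else 0)
    (hccr' : ∀ x y, a x * a y + ε • (a y * a x) = 0)
    (Q : ℕ → E →L[ℂ] E)
    (hQsa : ∀ k, IsSelfAdjoint (Q k))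
    (hNQ : ∀ k, (∑ x, adjoint (a x) * a x) * Q k = (k : ℂ) • Q k)
    (hQa : ∀ k x, a x * Q (k + 1) = Q k * (a x * Q (k + 1)))
    (m₀ m₁ : ℕ) (Hbody : ℕ → E →L[ℂ] E)
    (hbody : ∀ m ∈ Finset.Icc m₀ m₁, ∃ W : (Fin m → Λ) → (Fin m → Λ) → ℂ,
        Hbody m = ∑ x : Fin m → Λ, ∑ y : Fin m → Λ, W x y •
          ((List.ofFn fun i => adjoint (a (x i))).prod *
            ((List.ofFn fun i => a (y i)).reverse).prod))
    (hpos : ∀ m ∈ Finset.Icc m₀ m₁, m₀ < m → (Hbody m).IsPositive)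
    (H : E →L[ℂ] E) (hH : H = ∑ m ∈ Finset.Icc m₀ m₁, Hbody m)
    (n : ℕ) (hn : m₁ ≤ n) :
    (Q (n + 1) * (H - ((n : ℂ) + 1 - (m₀ : ℂ))⁻¹ •
        (∑ x, adjoint (a x) * (H * Q n) * a x)) * Q (n + 1)).IsPositive := by
  have hcr := satisfiesCanonicalRelations_adjoint a hε hccr hccr'
  have hbody' : ∀ m ∈ Finset.Icc m₀ m₁, IsBodyOperator ℂ (fun x => adjoint (a x)) a m (Hbody m) :=
    hbody
  have hconj := mul_sum_conj_mul_eq_sum_smul _ _ (fun m hm => (hbody' m hm).sum_conj hcr)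
    (hQa n) (hNQ (n + 1))
  rw [← hH] at hconj
  have hexpand : Q (n + 1) * (H - ((n : ℂ) + 1 - (m₀ : ℂ))⁻¹ •
        (∑ x, adjoint (a x) * (H * Q n) * a x)) * Q (n + 1)
      = ∑ m ∈ Finset.Icc m₀ m₁, (1 - ((n : ℂ) + 1 - m₀)⁻¹ * (((n + 1 : ℕ) : ℂ) - m)) •
          (Q (n + 1) * Hbody m * Q (n + 1)) := by
    rw [mul_sub, sub_mul, mul_smul_comm, smul_mul_assoc, hconj, hH, Finset.mul_sum,
      Finset.sum_mul, Finset.smul_sum, ← Finset.sum_sub_distrib]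
    simp only [sub_smul, one_smul, mul_smul]
  rw [hexpand]
  refine isPositive_sum _ fun m hm => ?_
  obtain ⟨hm₀, hm₁⟩ := Finset.mem_Icc.mp hm
  rcases hm₀.eq_or_lt with rfl | hlt
  · have hc : (n : ℂ) + 1 - m₀ ≠ 0 := sub_ne_zero.mpr (by exact_mod_cast (by omega : n + 1 ≠ m₀))
    rw [Nat.cast_succ, inv_mul_cancel₀ hc, sub_self, zero_smul]
    exact isPositive_zero
  · exact ((hpos m hm hlt).mul_mul_of_isSelfAdjoint (hQsa (n + 1))).smul_of_nonneg
      (one_sub_inv_mul_nonneg hm₀ (hm₁.trans hn))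

/-- **Key Lemma.**
Let `H = ∑_{m=m₀}^{m₁} H⁽ᵐ⁾` be a sum of self-adjoint `m`-body operators on the fermionic
(`ε = 1`) or bosonic (`ε = -1`) Fock space over `ℓ²(Λ)`, with `H⁽ᵐ⁾ ≥ 0` for all `m > m₀`.
Then for all `n ≥ m₁`, as an operator inequality on the `(n+1)`-particle sector,
`H_{n+1} ≥ (n+1−m₀)⁻¹ ∑ₓ a x† H_n (a x)`. -/
theorem key_lemma
    {E : Type*} [NormedAddCommGroup E] [InnerProductSpace ℂ E] [CompleteSpace E]
    {Λ : Type*} [Fintype Λ] [DecidableEq Λ]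
    (a : Λ → E →L[ℂ] E) (ε : ℂ) (hε : ε = 1 ∨ ε = -1)
    (hccr : ∀ x y, a x * adjoint (a y) + ε • (adjoint (a y) * a x)
        = if x = y then (1 : E →L[ℂ] E) else 0)
    (hccr' : ∀ x y, a x * a y + ε • (a y * a x) = 0)
    (Q : ℕ → E →L[ℂ] E)
    (hQproj : ∀ k, IsIdempotentElem (Q k)) (hQsa : ∀ k, IsSelfAdjoint (Q k))
    (hNQ : ∀ k, (∑ x, adjoint (a x) * a x) * Q k = (k : ℂ) • Q k)
    (hQa : ∀ k x, a x * Q (k + 1) = Q k * (a x * Q (k + 1)))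
    (m₀ m₁ : ℕ) (hm : m₀ ≤ m₁) (Hbody : ℕ → E →L[ℂ] E)
    (hbody : ∀ m ∈ Finset.Icc m₀ m₁, ∃ W : (Fin m → Λ) → (Fin m → Λ) → ℂ,
        Hbody m = ∑ x : Fin m → Λ, ∑ y : Fin m → Λ, W x y •
          ((List.ofFn fun i => adjoint (a (x i))).prod *
            ((List.ofFn fun i => a (y i)).reverse).prod))
    (hsa : ∀ m ∈ Finset.Icc m₀ m₁, IsSelfAdjoint (Hbody m))
    (hpos : ∀ m ∈ Finset.Icc m₀ m₁, m₀ < m → (Hbody m).IsPositive)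
    (H : E →L[ℂ] E) (hH : H = ∑ m ∈ Finset.Icc m₀ m₁, Hbody m)
    (n : ℕ) (hn : m₁ ≤ n) :
    (Q (n + 1) * (H - ((n : ℂ) + 1 - (m₀ : ℂ))⁻¹ •
        (∑ x, adjoint (a x) * (H * Q n) * a x)) * Q (n + 1)).IsPositive :=
  key_lemma_general a ε hε hccr hccr' Q hQsa hNQ hQa m₀ m₁ Hbody hbody hpos H hH n hn
end

section
/- Let T, U, V be unitaries on a Hilbert space with U = exp(2πi N/L) and V = exp(2πi D/L), where N = Σ_{x=1}^L N_x and D = Σ_{x=1}^L x N_x, the N_x being commuting self-adjoint operators with integer spectrum, and T a unitary with T† N_x T = N_{(x+1) mod L} (so T† a_x T = a_{(x−1) mod L}). Then VT = UTV, UT = TU, and UV = VU. -/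
open ContinuousLinearMap

/-!
Conjugation by `T` shifts every site by one, so it fixes the charge `N = ∑ₓ Nₓ` and sends the
dipole `D = ∑ₓ x Nₓ` to `D + N - L N₋₁`: every site gains one unit of position except the last,
which wraps around to `0` and loses `L - 1`. Hence `T† U T = U` and
`T† V T = V U exp(-2πi N₋₁) = V U`, the last factor being `1` because `N₋₁` has integer spectrum;
`U V = V U` because `N` and `D` commute.
-/

theorem ZMod.natCast_val_add_one {R : Type*} [Ring R] {n : ℕ} [NeZero n] (y : ZMod n) :
    (((y + 1).val : ℕ) : R) = y.val + 1 - if y = -1 then (n : R) else 0 := by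
  have h := ZMod.cast_sub_one (R := R) (y + 1)
  rw [add_sub_cancel_right] at h
  rw [ZMod.natCast_val, ZMod.natCast_val, h]
  by_cases hy : y = -1
  · simp [hy]
  · simp [hy, ← eq_neg_iff_add_eq_zero]

theorem semiconjBy_of_conj_eq {M : Type*} [Monoid M] {u v a b : M} (huv : u * v = 1)
    (h : v * a * u = b) : SemiconjBy u b a := by
  rw [SemiconjBy, ← h, ← mul_assoc, ← mul_assoc, huv, one_mul]

theorem semiconjBy_sum_smul_shift {G R A : Type*} [AddGroup G] [Fintype G] [Semiring R]
    [Semiring A] [Module R A] [SMulCommClass R A A] [IsScalarTower R A A] {u : A} {f : G → A}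
    {a : G} (h : ∀ x, SemiconjBy u (f (x - a)) (f x)) (g : G → R) :
    SemiconjBy u (∑ x, g (x + a) • f x) (∑ x, g x • f x) := by
  rw [← (Equiv.subRight a).sum_comp]
  simp only [Equiv.subRight_apply, sub_add_cancel, SemiconjBy, Finset.mul_sum, Finset.sum_mul]
  exact Finset.sum_congr rfl fun x _ => ((h x).smul_right (g x)).eq

theorem ZMod.sum_natCast_val_add_one_smul {R M : Type*} [Ring R] [AddCommGroup M] [Module R M]
    {n : ℕ} [NeZero n] (f : ZMod n → M) :
    ∑ y, (((y + 1).val : ℕ) : R) • f y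
      = ∑ y, (y.val : R) • f y + ∑ y, f y - (n : R) • f (-1) := by
  simp only [ZMod.natCast_val_add_one, sub_smul, add_smul, one_smul, ite_smul, zero_smul,
    Finset.sum_sub_distrib, Finset.sum_add_distrib, Finset.sum_ite_eq', Finset.mem_univ, if_true]

open NormedSpace in
theorem NormedSpace.exp_sub_of_exp_eq_one {A : Type*} [NormedRing A] [NormedAlgebra ℚ A]
    [CompleteSpace A] {x z : A} (hxz : Commute x z) (hz : exp z = 1) : exp (x - z) = exp x :=
  calc exp (x - z) = exp (x - z) * exp z := by rw [hz, mul_one]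
    _ = exp x := by rw [← exp_add_of_commute (hxz.sub_left (Commute.refl z)), sub_add_cancel]

theorem charge_dipole_translation_relations_general
    {E : Type*} [NormedAddCommGroup E] [InnerProductSpace ℂ E] [CompleteSpace E]
    (L : ℕ) [NeZero L]
    (Nop : ZMod L → E →L[ℂ] E)
    (hcomm : ∀ x y, Nop x * Nop y = Nop y * Nop x)
    (hint : ∀ x, NormedSpace.exp ((2 * (Real.pi : ℂ) * Complex.I) • Nop x) = 1)
    (T : E →L[ℂ] E) (hT₂ : T * adjoint T = 1)
    (hT : ∀ x, adjoint T * Nop x * T = Nop (x - 1)) :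
    NormedSpace.exp ((2 * (Real.pi : ℂ) * Complex.I / L) •
          ∑ x : ZMod L, (x.val : ℂ) • Nop x) * T
      = NormedSpace.exp ((2 * (Real.pi : ℂ) * Complex.I / L) • ∑ x : ZMod L, Nop x) *
        (T * NormedSpace.exp ((2 * (Real.pi : ℂ) * Complex.I / L) •
          ∑ x : ZMod L, (x.val : ℂ) • Nop x)) ∧
    NormedSpace.exp ((2 * (Real.pi : ℂ) * Complex.I / L) • ∑ x : ZMod L, Nop x) * T
      = T * NormedSpace.exp ((2 * (Real.pi : ℂ) * Complex.I / L) • ∑ x : ZMod L, Nop x) ∧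
    NormedSpace.exp ((2 * (Real.pi : ℂ) * Complex.I / L) • ∑ x : ZMod L, Nop x) *
        NormedSpace.exp ((2 * (Real.pi : ℂ) * Complex.I / L) •
          ∑ x : ZMod L, (x.val : ℂ) • Nop x)
      = NormedSpace.exp ((2 * (Real.pi : ℂ) * Complex.I / L) •
          ∑ x : ZMod L, (x.val : ℂ) • Nop x) *
        NormedSpace.exp ((2 * (Real.pi : ℂ) * Complex.I / L) • ∑ x : ZMod L, Nop x) := by
  -- `exp_add_of_commute` and `SemiconjBy.exp_right` need this; it is not found by instance search.
  let _ : NormedAlgebra ℚ (E →L[ℂ] E) := NormedAlgebra.restrictScalars ℚ ℂ (E →L[ℂ] E)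
  set c : ℂ := 2 * (Real.pi : ℂ) * Complex.I / L
  set N := ∑ x : ZMod L, Nop x
  set D := ∑ x : ZMod L, (x.val : ℂ) • Nop x
  have hshift x : SemiconjBy T (Nop (x - 1)) (Nop x) := semiconjBy_of_conj_eq hT₂ (hT x)
  have hTN : SemiconjBy T N N := by
    simpa only [one_smul] using semiconjBy_sum_smul_shift hshift fun _ => (1 : ℂ)
  have hTD : SemiconjBy T (D + N - (L : ℂ) • Nop (-1)) D := by
    rw [← ZMod.sum_natCast_val_add_one_smul]
    exact semiconjBy_sum_smul_shift hshift fun x => (x.val : ℂ)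
  have hNopN x : Commute (Nop x) N := Commute.sum_right _ _ _ fun y _ => hcomm x y
  have hNopD x : Commute (Nop x) D :=
    Commute.sum_right _ _ _ fun y _ => Commute.smul_right (hcomm x y) _
  have hND : Commute (c • N) (c • D) :=
    ((Commute.sum_left _ _ _ fun x _ => hNopD x).smul_left c).smul_right c
  have hUT := (hTN.smul_right c).exp_right.eq.symm
  have hVT :
      NormedSpace.exp (c • D) * T = T * (NormedSpace.exp (c • D) * NormedSpace.exp (c • N)) := by
    have hwind : c • (D + N - (L : ℂ) • Nop (-1))
        = c • D + c • N - (2 * (Real.pi : ℂ) * Complex.I) • Nop (-1) := by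
      rw [smul_sub, smul_add, smul_smul, div_mul_cancel₀ _ (Nat.cast_ne_zero.mpr (NeZero.ne L))]
    rw [← (hTD.smul_right c).exp_right.eq, hwind, NormedSpace.exp_sub_of_exp_eq_one
      ((((hNopD _).symm.smul_left c).add_left ((hNopN _).symm.smul_left c)).smul_right _) (hint _),
      NormedSpace.exp_add_of_commute hND.symm]
  refine ⟨?_, hUT, hND.exp⟩
  rw [hVT, ← hND.exp.eq, ← mul_assoc, ← hUT, mul_assoc]

/-- **Charge–dipole–translation algebra.**
Let `Nop x` (for `x` in the ring `ℤ/Lℤ`) be commuting self-adjoint operators with integer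
spectrum (encoded as `exp(2πi Nop x) = 1`), let `T` be a unitary implementing the translation
`T† (Nop x) T = Nop (x − 1)` (i.e. `T† a_x T = a_{x−1 mod L}`), and set
`U = exp(2πi N / L)`, `V = exp(2πi D / L)` with `N = ∑ₓ Nop x` and `D = ∑ₓ x ⬝ Nop x`.
Then `V T = U T V`, `U T = T U`, and `U V = V U`. -/
theorem charge_dipole_translation_relations
    {E : Type*} [NormedAddCommGroup E] [InnerProductSpace ℂ E] [CompleteSpace E]
    (L : ℕ) [NeZero L]
    (Nop : ZMod L → E →L[ℂ] E)
    (hsa : ∀ x, IsSelfAdjoint (Nop x))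
    (hcomm : ∀ x y, Nop x * Nop y = Nop y * Nop x)
    (hint : ∀ x, NormedSpace.exp ((2 * (Real.pi : ℂ) * Complex.I) • Nop x) = 1)
    (T : E →L[ℂ] E) (hT₁ : adjoint T * T = 1) (hT₂ : T * adjoint T = 1)
    (hT : ∀ x, adjoint T * Nop x * T = Nop (x - 1)) :
    NormedSpace.exp ((2 * (Real.pi : ℂ) * Complex.I / L) •
          ∑ x : ZMod L, (x.val : ℂ) • Nop x) * T
      = NormedSpace.exp ((2 * (Real.pi : ℂ) * Complex.I / L) • ∑ x : ZMod L, Nop x) *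
        (T * NormedSpace.exp ((2 * (Real.pi : ℂ) * Complex.I / L) •
          ∑ x : ZMod L, (x.val : ℂ) • Nop x)) ∧
    NormedSpace.exp ((2 * (Real.pi : ℂ) * Complex.I / L) • ∑ x : ZMod L, Nop x) * T
      = T * NormedSpace.exp ((2 * (Real.pi : ℂ) * Complex.I / L) • ∑ x : ZMod L, Nop x) ∧
    NormedSpace.exp ((2 * (Real.pi : ℂ) * Complex.I / L) • ∑ x : ZMod L, Nop x) *
        NormedSpace.exp ((2 * (Real.pi : ℂ) * Complex.I / L) •
          ∑ x : ZMod L, (x.val : ℂ) • Nop x)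
      = NormedSpace.exp ((2 * (Real.pi : ℂ) * Complex.I / L) •
          ∑ x : ZMod L, (x.val : ℂ) • Nop x) *
        NormedSpace.exp ((2 * (Real.pi : ℂ) * Complex.I / L) • ∑ x : ZMod L, Nop x) :=
  charge_dipole_translation_relations_general L Nop hcomm hint T hT₂ hT
end

section
/- Suppose φ is a normalized joint eigenvector of V with V φ = exp(2πi d_φ/L) φ (d_φ ∈ ℤ), and T is the translation unitary with VT = UTV where U φ' = exp(2πi n_q/L) φ' on the n_q-particle sector. Then V T^j φ = exp(2πi (d_φ/L + j p/q)) T^j φ for j = 0,…,q−1, where n_q = pL/q. In particular, if p and q are coprime, the vectors φ, Tφ, …, T^{q−1}φ are pairwise orthonormal, so the space they span is q-dimensional. -/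
/-!
Conjugating by `T` multiplies `V` by `ζ = exp(2πi n_q/L) = exp(2πi p/q)`, so `Tʲ φ` is a
`V`-eigenvector with eigenvalue `exp(2πi d/L) ζʲ`. Since `p` and `q` are coprime, `ζ` is a
primitive `q`-th root of unity, so these eigenvalues are distinct for `j < q`; eigenvectors of an
isometry for distinct eigenvalues are orthogonal, and `T` preserves the norm of `φ`.
-/

open ContinuousLinearMap
open scoped InnerProductSpace

section Eigenvectors

variable {𝕜 E : Type*} [RCLike 𝕜] [NormedAddCommGroup E] [InnerProductSpace 𝕜 E]

theorem ContinuousLinearMap.apply_pow_apply_eq_smul_of_mul_eq_smul_mul {V T : E →L[𝕜] E}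
    {c a : 𝕜} (hVT : V * T = c • (T * V)) {x : E} (hx : V x = a • x) (j : ℕ) :
    V ((T ^ j) x) = (a * c ^ j) • (T ^ j) x := by
  induction j with
  | zero => simpa using hx
  | succ j ih =>
    have hVTy : V (T ((T ^ j) x)) = c • T (V ((T ^ j) x)) := by
      simpa using congrArg (fun A : E →L[𝕜] E => A ((T ^ j) x)) hVT
    rw [pow_succ', mul_apply_eq_comp, hVTy, ih, map_smul, smul_smul, pow_succ]
    ring_nf

theorem ContinuousLinearMap.norm_pow_apply_of_norm_map {T : E →L[𝕜] E}
    (hT : ∀ x, ‖T x‖ = ‖x‖) (x : E) (j : ℕ) : ‖(T ^ j) x‖ = ‖x‖ := by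
  induction j with
  | zero => rfl
  | succ j ih => rw [pow_succ', mul_apply_eq_comp, hT, ih]

theorem inner_eq_zero_of_inner_map_map_of_apply_eq_smul {V : E →L[𝕜] E}
    (hV : ∀ x y, ⟪V x, V y⟫_𝕜 = ⟪x, y⟫_𝕜) {x y : E} {a b : 𝕜}
    (hx : V x = a • x) (hy : V y = b • y) (hx₀ : x ≠ 0) (hab : a ≠ b) : ⟪x, y⟫_𝕜 = 0 := by
  have hxx : starRingEnd 𝕜 a * a * ⟪x, x⟫_𝕜 = ⟪x, x⟫_𝕜 := by
    have := hV x x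
    rwa [hx, inner_smul_left, inner_smul_right, ← mul_assoc] at this
  have ha : starRingEnd 𝕜 a * a = 1 := (mul_eq_right₀ (inner_self_ne_zero.mpr hx₀)).mp hxx
  have hxy : starRingEnd 𝕜 a * b * ⟪x, y⟫_𝕜 = ⟪x, y⟫_𝕜 := by
    have := hV x y
    rwa [hx, hy, inner_smul_left, inner_smul_right, ← mul_assoc] at this
  have : (a - b) * ⟪x, y⟫_𝕜 = 0 := by linear_combination -a * hxy + b * ⟪x, y⟫_𝕜 * ha
  exact (mul_eq_zero.mp this).resolve_left (sub_ne_zero.mpr hab)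

theorem orthonormal_of_inner_map_map_of_apply_eq_smul {ι : Type*} {V : E →L[𝕜] E}
    (hV : ∀ x y, ⟪V x, V y⟫_𝕜 = ⟪x, y⟫_𝕜) {v : ι → E} {μ : ι → 𝕜}
    (hv : ∀ i, ‖v i‖ = 1) (hμ : Function.Injective μ) (hVv : ∀ i, V (v i) = μ i • v i) :
    Orthonormal 𝕜 v :=
  ⟨hv, fun i j hij => inner_eq_zero_of_inner_map_map_of_apply_eq_smul hV (hVv i) (hVv j)
    (by simp [← norm_ne_zero_iff, hv]) (hμ.ne hij)⟩

end Eigenvectors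

theorem translated_ground_states_eigenvalues_general
    {E : Type*} [NormedAddCommGroup E] [InnerProductSpace ℂ E] [CompleteSpace E]
    (L p q n_q : ℕ) (hL : 0 < L) (hpq : p < q) (hcop : Nat.Coprime p q)
    (hnq : q * n_q = p * L)
    (T V : E →L[ℂ] E)
    (hT₁ : adjoint T * T = 1)
    (hV₁ : adjoint V * V = 1)
    (hVT : V * T = Complex.exp (2 * (Real.pi : ℂ) * Complex.I * n_q / L) • (T * V))
    (φ : E) (hφ : ‖φ‖ = 1) (d : ℤ)
    (hVφ : V φ = Complex.exp (2 * (Real.pi : ℂ) * Complex.I * d / L) • φ) :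
    (∀ j : ℕ, j < q →
        V ((T ^ j) φ)
          = Complex.exp (2 * (Real.pi : ℂ) * Complex.I *
              ((d : ℂ) / L + (j : ℂ) * p / q)) • (T ^ j) φ) ∧
      Orthonormal ℂ (fun j : Fin q => (T ^ (j : ℕ)) φ) ∧
      Module.finrank ℂ
        (Submodule.span ℂ (Set.range fun j : Fin q => (T ^ (j : ℕ)) φ)) = q := by
  set a := Complex.exp (2 * (Real.pi : ℂ) * Complex.I * d / L)
  set ζ := Complex.exp (2 * (Real.pi : ℂ) * Complex.I * (p / q))
  have hq : q ≠ 0 := by omega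
  have hζ : IsPrimitiveRoot ζ q := Complex.isPrimitiveRoot_exp_of_coprime p q hq hcop
  have hVT' : V * T = ζ • (T * V) := by
    have hratio : (n_q : ℂ) / L = p / q := by
      rw [div_eq_div_iff (by exact_mod_cast hL.ne') (by exact_mod_cast hq)]
      exact_mod_cast (mul_comm n_q q).trans hnq
    rwa [mul_div_assoc, hratio] at hVT
  have heig (j : ℕ) : V ((T ^ j) φ) = (a * ζ ^ j) • (T ^ j) φ :=
    apply_pow_apply_eq_smul_of_mul_eq_smul_mul hVT' hVφ j
  have hμ (j : ℕ) : a * ζ ^ j = Complex.exp (2 * (Real.pi : ℂ) * Complex.I *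
      ((d : ℂ) / L + (j : ℂ) * p / q)) := by
    rw [← Complex.exp_nat_mul, ← Complex.exp_add]
    ring_nf
  have hON : Orthonormal ℂ (fun j : Fin q => (T ^ (j : ℕ)) φ) :=
    orthonormal_of_inner_map_map_of_apply_eq_smul
      ((inner_map_map_iff_adjoint_comp_self V).mpr hV₁) (μ := fun j : Fin q => a * ζ ^ (j : ℕ))
      (fun j => by rw [norm_pow_apply_of_norm_map
        ((norm_map_iff_adjoint_comp_self T).mpr hT₁), hφ])
      (fun i j hij => Fin.ext <| hζ.pow_inj i.isLt j.isLt <|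
        mul_left_cancel₀ (Complex.exp_ne_zero _) hij)
      (fun j => heig j)
  refine ⟨fun j _ => (heig j).trans (by rw [hμ]), hON, ?_⟩
  rw [finrank_span_eq_card hON.linearIndependent, Fintype.card_fin]

/-- **Dipole eigenvalues of the translated ground states.**
If `φ` is a normalized `V`-eigenvector with eigenvalue `exp(2πi d/L)`, `T` is a unitary with
`V T = exp(2πi n_q/L) T V` (i.e. `V T = U T V`, `U` acting as the scalar `exp(2πi n_q/L)` on
the `n_q`-particle sector), and `n_q = pL/q` with `p, q` coprime, then
`V (Tʲ φ) = exp(2πi (d/L + j p/q)) Tʲ φ` for `j = 0,…,q−1`; in particular the vectors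
`φ, Tφ, …, T^{q−1} φ` are orthonormal and span a `q`-dimensional space. -/
theorem translated_ground_states_eigenvalues
    {E : Type*} [NormedAddCommGroup E] [InnerProductSpace ℂ E] [CompleteSpace E]
    (L p q n_q : ℕ) (hL : 0 < L) (hp : 1 ≤ p) (hpq : p < q) (hcop : Nat.Coprime p q)
    (hnq : q * n_q = p * L)
    (T V : E →L[ℂ] E)
    (hT₁ : adjoint T * T = 1) (hT₂ : T * adjoint T = 1)
    (hV₁ : adjoint V * V = 1) (hV₂ : V * adjoint V = 1)
    (hVT : V * T = Complex.exp (2 * (Real.pi : ℂ) * Complex.I * n_q / L) • (T * V))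
    (φ : E) (hφ : ‖φ‖ = 1) (d : ℤ)
    (hVφ : V φ = Complex.exp (2 * (Real.pi : ℂ) * Complex.I * d / L) • φ) :
    (∀ j : ℕ, j < q →
        V ((T ^ j) φ)
          = Complex.exp (2 * (Real.pi : ℂ) * Complex.I *
              ((d : ℂ) / L + (j : ℂ) * p / q)) • (T ^ j) φ) ∧
      Orthonormal ℂ (fun j : Fin q => (T ^ (j : ℕ)) φ) ∧
      Module.finrank ℂ
        (Submodule.span ℂ (Set.range fun j : Fin q => (T ^ (j : ℕ)) φ)) = q :=
  translated_ground_states_eigenvalues_general L p q n_q hL hpq hcop hnq T V hT₁ hV₁ hVT φ hφ d hVφ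
end

section
/- (Incompressibility, fermionic case) Let H satisfy: H_n ≥ 0 for n ≥ n_q; H_{n+1} ≥ c Σ_x a_x† H_n a_x for some c > 0 and all n ≥ n_q; H commutes with V = exp(2πi D/L); and ker H_{n_q} = span{φ, Tφ, …, T^{q−1}φ} with the T^j φ being V-eigenvectors with q distinct eigenvalues among the L-th roots of unity times a fixed phase. If the particles are fermions and L ≥ q²/p (so that n_q = pL/q ≥ q), then ker H_{n_q+1} = {0}. -/
/-!
Decompose a zero-energy state `ψ` at filling `n_q + 1` into eigenvectors of the dipole unitary
`V` (possible since `V ^ L = 1`), so that `V ψ = ω ^ k ψ`. Positivity of `H_{n_q}` and the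
recursion `H_{n_q+1} ≥ c ∑ₓ a x† H_{n_q} a x` force every `a x ψ` into `ker H_{n_q}`, and
`a x ψ` is a `V`-eigenvector of eigenvalue `ω ^ (k - x)`. Eigenvectors of distinct eigenvalues
are independent, so `a x ψ ≠ 0` only if `k - x` is one of the `q` exponents of the ground
states. For fermions `‖a x ψ‖ ≤ ‖ψ‖`, hence
`(n_q + 1) ‖ψ‖² = ∑ₓ ‖a x ψ‖² ≤ q ‖ψ‖² ≤ n_q ‖ψ‖²`, and `ψ = 0`.
-/

open ContinuousLinearMap Finset

theorem Complex.exp_two_pi_I_mul_div (n : ℤ) (L : ℕ) :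
    exp (2 * Real.pi * I * n / L) = exp (2 * Real.pi * I / L) ^ n := by
  rw [← exp_int_mul]; ring_nf

namespace IsPrimitiveRoot

variable {K : Type*} [Field K] {ω : K} {L : ℕ}

theorem zpow_eq_zpow_iff_intCast_eq [NeZero L] (hω : IsPrimitiveRoot ω L) (m n : ℤ) :
    ω ^ m = ω ^ n ↔ (m : ZMod L) = n := by
  have hω0 : ω ≠ 0 := hω.ne_zero (NeZero.ne L)
  rw [← sub_eq_zero (a := (m : ZMod L)), ← Int.cast_sub, ZMod.intCast_zmod_eq_zero_iff_dvd,
    ← hω.zpow_eq_one_iff_dvd, zpow_sub₀ hω0, div_eq_one_iff_eq (zpow_ne_zero _ hω0)]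

theorem sum_range_inv_pow_pow (hω : IsPrimitiveRoot ω L) {m : ℕ} (hm : m < L) :
    ∑ k ∈ range L, (ω ^ k)⁻¹ ^ m = if m = 0 then (L : K) else 0 := by
  split_ifs with h0
  · simp [h0]
  have hζ : (ω ^ m)⁻¹ ≠ 1 := inv_ne_one.mpr (hω.pow_ne_one_of_pos_of_lt h0 hm)
  have hswap : ∀ k, (ω ^ k)⁻¹ ^ m = (ω ^ m)⁻¹ ^ k := fun k => by
    rw [inv_pow, inv_pow, ← pow_mul, ← pow_mul, mul_comm]
  simp_rw [hswap]
  rw [geom_sum_eq hζ, inv_pow, ← pow_mul, mul_comm, pow_mul, hω.pow_eq_one, one_pow, inv_one,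
    sub_self, zero_div]

end IsPrimitiveRoot

section EigenProjection

variable {K A : Type*} [Field K] [Ring A] [Algebra K A]

/-- The projection onto the `ω ^ k`-eigenspace of `u` when `u ^ L = 1` and `ω` is a primitive
`L`-th root of unity. -/
def eigenProjection (ω : K) (L : ℕ) (u : A) (k : ℕ) : A :=
  (L : K)⁻¹ • ∑ m ∈ range L, (ω ^ k)⁻¹ ^ m • u ^ m

variable {ω : K} {L : ℕ} {u : A}

theorem mul_eigenProjection [NeZero L] (hω : ω ^ L = 1) (hu : u ^ L = 1) (k : ℕ) :
    u * eigenProjection ω L u k = ω ^ k • eigenProjection ω L u k := by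
  have hω0 : ω ^ k ≠ 0 := pow_ne_zero _ (ne_zero_pow (NeZero.ne L) (hω ▸ one_ne_zero))
  set g : ℕ → A := fun m => (ω ^ k)⁻¹ ^ m • u ^ m
  have hperiodic : g L = g 0 := by
    simp only [g]
    rw [hu, inv_pow, ← pow_mul, mul_comm, pow_mul, hω, one_pow, inv_one, pow_zero, pow_zero]
  have hshift : ∑ m ∈ range L, g (m + 1) = ∑ m ∈ range L, g m := by
    have := (sum_range_succ g L).symm.trans (sum_range_succ' g L)
    rw [hperiodic] at this
    exact (add_right_cancel this).symm
  have hstep : ∀ m, u * g m = ω ^ k • g (m + 1) := fun m => by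
    simp only [g]
    rw [mul_smul_comm, ← pow_succ', smul_smul, pow_succ' (ω ^ k)⁻¹, ← mul_assoc,
      mul_inv_cancel₀ hω0, one_mul]
  change u * ((L : K)⁻¹ • ∑ m ∈ range L, g m) =
    ω ^ k • (L : K)⁻¹ • ∑ m ∈ range L, g m
  rw [mul_smul_comm, mul_sum, sum_congr rfl fun m _ => hstep m, ← smul_sum, hshift, smul_comm]

theorem sum_eigenProjection [NeZero L] (hω : IsPrimitiveRoot ω L) :
    ∑ k ∈ range L, eigenProjection ω L u k = 1 := by
  have hL : (L : K) ≠ 0 := hω.neZero'.out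
  simp_rw [eigenProjection, ← smul_sum]
  rw [sum_comm]
  simp_rw [← sum_smul]
  rw [sum_congr rfl fun m hm => by rw [hω.sum_range_inv_pow_pow (mem_range.mp hm)],
    sum_eq_single_of_mem 0 (mem_range.mpr (NeZero.pos L)) fun m _ hm => by
      rw [if_neg hm, zero_smul],
    if_pos rfl, pow_zero, smul_smul, inv_mul_cancel₀ hL, one_smul]

theorem Commute.eigenProjection {a : A} (h : Commute a u) (k : ℕ) :
    Commute a (eigenProjection ω L u k) :=
  (Commute.sum_right _ _ _ fun m _ => (h.pow_right m).smul_right _).smul_right _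

end EigenProjection

theorem Module.End.exists_eq_of_mem_span_eigenvectors {K M ι : Type*} [Field K]
    [AddCommGroup M] [Module K M] {f : Module.End K M} {v : ι → M} {μ : ι → K}
    (hv : ∀ i, f (v i) = μ i • v i) {w : M} (hw : w ∈ Submodule.span K (Set.range v))
    (hw0 : w ≠ 0) {ν : K} (hfw : f w = ν • w) : ∃ i, μ i = ν := by
  by_contra! hne
  have hle :
      Submodule.span K (Set.range v) ≤ ⨆ (μ' : K) (_ : μ' ≠ ν), f.eigenspace μ' := by
    rw [Submodule.span_le]
    rintro _ ⟨i, rfl⟩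
    exact Submodule.mem_iSup_of_mem (μ i) (Submodule.mem_iSup_of_mem (hne i)
      (Module.End.mem_eigenspace_iff.mpr (hv i)))
  exact hw0 ((f.eigenspaces_iSupIndep ν).le_bot
    ⟨Module.End.mem_eigenspace_iff.mpr hfw, hle hw⟩)

theorem apply_eq_zero_of_notMem_image {K M ι : Type*} [Field K] [AddCommGroup M] [Module K M]
    [Fintype ι] {L : ℕ} [NeZero L] {ω : K} (hω : IsPrimitiveRoot ω L) {V : Module.End K M}
    {a : ZMod L → Module.End K M} (hVa : ∀ x y, V (a x y) = ω ^ (-(x.val : ℤ)) • a x (V y))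
    {χ : ι → M} {d : ι → ℤ} (hχ : ∀ j, V (χ j) = ω ^ d j • χ j) {φ : M} {k : ℤ}
    (hφ : V φ = ω ^ k • φ) (hspan : ∀ x, a x φ ∈ Submodule.span K (Set.range χ)) :
    ∀ x ∉ univ.image fun j => (k : ZMod L) - d j, a x φ = 0 := by
  intro x hx
  by_contra hne
  have hVaφ : V (a x φ) = ω ^ (k - x.val) • a x φ := by
    rw [hVa, hφ, map_smul, smul_smul, ← zpow_add₀ (hω.ne_zero (NeZero.ne L)), neg_add_eq_sub]
  obtain ⟨j, hj⟩ := Module.End.exists_eq_of_mem_span_eigenvectors hχ (hspan x) hne hVaφ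
  rw [hω.zpow_eq_zpow_iff_intCast_eq] at hj
  push_cast at hj
  exact hx (mem_image.mpr ⟨j, mem_univ j, by rw [hj]; simp⟩)

namespace ContinuousLinearMap

section RCLike

variable {𝕜 E : Type*} [RCLike 𝕜] [NormedAddCommGroup E] [InnerProductSpace 𝕜 E]
  [CompleteSpace E]

theorem norm_apply_le_of_anticommutator_eq_one {A : E →L[𝕜] E}
    (h : A * adjoint A + adjoint A * A = 1) (x : E) : ‖A x‖ ≤ ‖x‖ := by
  have hx : ‖x‖ ^ 2 = ‖adjoint A x‖ ^ 2 + ‖A x‖ ^ 2 := by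
    rw [apply_norm_sq_eq_inner_adjoint_left, apply_norm_sq_eq_inner_adjoint_left,
      adjoint_adjoint, ← map_add, ← inner_add_left, ← add_apply, ← mul_def, ← mul_def, h,
      one_apply_eq_self, inner_self_eq_norm_sq]
  nlinarith [sq_nonneg ‖adjoint A x‖, norm_nonneg x, norm_nonneg (A x)]

variable {ι : Type*} [Fintype ι] (a : ι → E →L[𝕜] E) {x : E} {n : ℕ}

theorem sum_norm_sq_apply_eq_of_sum_adjoint_mul_apply_eq
    (h : (∑ i, adjoint (a i) * a i) x = (n : 𝕜) • x) :
    ∑ i, ‖a i x‖ ^ 2 = n * ‖x‖ ^ 2 := by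
  simp_rw [apply_norm_sq_eq_inner_adjoint_left, ← mul_def, ← map_sum, ← sum_inner,
    ← _root_.sum_apply, h, inner_smul_left, inner_self_eq_norm_sq_to_K]
  simp

/-- Pauli exclusion: `n` fermions occupy at least `n` modes. -/
theorem le_card_of_apply_eq_zero_of_notMem
    (hcar : ∀ i, a i * adjoint (a i) + adjoint (a i) * a i = 1)
    (hN : (∑ i, adjoint (a i) * a i) x = (n : 𝕜) • x) (hx : x ≠ 0) (s : Finset ι)
    (hs : ∀ i ∉ s, a i x = 0) : n ≤ #s := by
  have hx2 : 0 < ‖x‖ ^ 2 := by positivity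
  have : (n : ℝ) * ‖x‖ ^ 2 ≤ #s * ‖x‖ ^ 2 :=
    calc (n : ℝ) * ‖x‖ ^ 2 = ∑ i, ‖a i x‖ ^ 2 :=
          (sum_norm_sq_apply_eq_of_sum_adjoint_mul_apply_eq a hN).symm
      _ = ∑ i ∈ s, ‖a i x‖ ^ 2 := (sum_subset (subset_univ s) fun i _ hi => by
          rw [hs i hi, norm_zero, sq, zero_mul]).symm
      _ ≤ ∑ i ∈ s, ‖x‖ ^ 2 := sum_le_sum fun i _ => by
          gcongr; exact norm_apply_le_of_anticommutator_eq_one (hcar i) x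
      _ = #s * ‖x‖ ^ 2 := by rw [sum_const, nsmul_eq_mul]
  exact_mod_cast le_of_mul_le_mul_right this hx2

end RCLike

variable {E : Type*} [NormedAddCommGroup E] [InnerProductSpace ℂ E] [CompleteSpace E]

theorem IsPositive.apply_eq_zero_of_re_inner_eq_zero {T : E →L[ℂ] E} (hT : T.IsPositive)
    {x : E} (h : RCLike.re (inner ℂ (T x) x) = 0) : T x = 0 := by
  have hT0 : 0 ≤ T := (nonneg_iff_isPositive T).mpr hT
  have hS : adjoint (CFC.sqrt T) = CFC.sqrt T := (CFC.sqrt_nonneg T).isSelfAdjoint.adjoint_eq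
  have hSx : CFC.sqrt T x = 0 := by
    rw [← norm_eq_zero, ← sq_eq_zero_iff, apply_norm_sq_eq_inner_adjoint_left, hS, ← mul_def,
      CFC.sqrt_mul_sqrt_self T hT0]
    exact h
  rw [← CFC.sqrt_mul_sqrt_self T hT0, mul_apply_eq_comp, hSx, map_zero]

theorem inner_sum_adjoint_conj_apply_self {ι : Type*} [Fintype ι] (a : ι → E →L[ℂ] E)
    (T : E →L[ℂ] E) (x : E) :
    inner ℂ ((∑ i, adjoint (a i) * T * a i) x) x = ∑ i, inner ℂ (T (a i x)) (a i x) := by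
  simp only [_root_.sum_apply, sum_inner, mul_apply_eq_comp, adjoint_inner_left]

/-- Evaluated at `x`, the positivity in `hrec` reads `0 ≤ -c ∑ᵢ re ⟪H (aᵢ x), aᵢ x⟫`,
a sum of terms that are nonnegative by `hpos`. -/
theorem apply_eq_zero_of_isPositive_recursion {ι : Type*} [Fintype ι] (a : ι → E →L[ℂ] E)
    {P P' H : E →L[ℂ] E} (hP' : IsSelfAdjoint P') (hHP : H * P = P * H)
    (hpos : (P * H * P).IsPositive) {c : ℝ} (hc : 0 < c)
    (hrec : (P' * (H - (c : ℂ) • ∑ i, adjoint (a i) * (H * P) * a i) * P').IsPositive)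
    {x : E} (hx : P' x = x) (hHx : H x = 0) (hax : ∀ i, P (a i x) = a i x) (i : ι) :
    H (a i x) = 0 := by
  have hHPa : ∀ j, (H * P) (a j x) = H (a j x) := fun j => by rw [mul_apply_eq_comp, hax]
  have hPHPa : ∀ j, (P * H * P) (a j x) = H (a j x) := fun j => by
    rw [← hHP, mul_apply_eq_comp, hax, hHPa]
  have hnonneg : ∀ j, 0 ≤ RCLike.re (inner ℂ (H (a j x)) (a j x)) :=
    fun j => hPHPa j ▸ hpos.re_inner_nonneg_left _
  have hrec_at_x : 0 ≤ -c * ∑ j, RCLike.re (inner ℂ (H (a j x)) (a j x)) := by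
    have hvec : (P' * (H - (c : ℂ) • ∑ i, adjoint (a i) * (H * P) * a i) * P') x
        = -((c : ℂ) • P' ((∑ i, adjoint (a i) * (H * P) * a i) x)) := by
      simp only [mul_apply_eq_comp, hx, sub_apply, smul_apply, hHx, zero_sub, map_neg,
        map_smul]
    have := hrec.re_inner_nonneg_left x
    rw [hvec, inner_neg_left, inner_smul_left, ← adjoint_inner_right, hP'.adjoint_eq, hx,
      inner_sum_adjoint_conj_apply_self] at this
    simpa [hHPa] using this
  have hsum : ∑ j, RCLike.re (inner ℂ (H (a j x)) (a j x)) = 0 :=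
    le_antisymm (nonpos_of_mul_nonneg_right hrec_at_x (neg_neg_of_pos hc))
      (sum_nonneg fun j _ => hnonneg j)
  rw [← hPHPa]
  exact hpos.apply_eq_zero_of_re_inner_eq_zero (by
    rw [hPHPa]; exact (sum_eq_zero_iff_of_nonneg fun j _ => hnonneg j).mp hsum i (mem_univ i))

end ContinuousLinearMap

theorem incompressibility_fermions_general
    {E : Type*} [NormedAddCommGroup E] [InnerProductSpace ℂ E] [CompleteSpace E]
    (L p q n_q : ℕ) [NeZero L]
    (hnq : q * n_q = p * L) (hLlarge : q ^ 2 ≤ p * L)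
    (a : ZMod L → E →L[ℂ] E)
    -- canonical anticommutation relations (fermions)
    (hcar : ∀ x y, a x * adjoint (a y) + adjoint (a y) * a x
        = if x = y then (1 : E →L[ℂ] E) else 0)
    -- particle-number sector projections
    (Q : ℕ → E →L[ℂ] E)
    (hQsa : ∀ k, IsSelfAdjoint (Q k))
    (hNQ : ∀ k, (∑ x, adjoint (a x) * a x) * Q k = (k : ℂ) • Q k)
    (hQa : ∀ k x, a x * Q (k + 1) = Q k * (a x * Q (k + 1)))
    -- the Hamiltonian: particle-number conserving, `H_n ≥ 0` for `n ≥ n_q`, recursion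
    (H : E →L[ℂ] E) (hHQ : ∀ k, H * Q k = Q k * H)
    (hpos : ∀ n, n_q ≤ n → (Q n * H * Q n).IsPositive)
    (hrec : ∃ c : ℝ, 0 < c ∧ ∀ n, n_q ≤ n →
        (Q (n + 1) * (H - (c : ℂ) • ∑ x, adjoint (a x) * (H * Q n) * a x)
          * Q (n + 1)).IsPositive)
    -- the dipole unitary `V`
    (V : E →L[ℂ] E)
    (hVL : V ^ L = 1) (hVH : V * H = H * V) (hVQ : ∀ k, V * Q k = Q k * V)
    (hVa : ∀ x : ZMod L,
        V * a x = Complex.exp (-(2 * (Real.pi : ℂ) * Complex.I * (x.val : ℂ) / L)) •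
          (a x * V))
    -- the ground-state space at filling `n_q`
    (χ : Fin q → E)
    (d : Fin q → ℤ)
    (hχV : ∀ j, V (χ j)
        = Complex.exp (2 * (Real.pi : ℂ) * Complex.I * (d j : ℂ) / L) • χ j)
    (hker : ∀ ψ : E, Q n_q ψ = ψ → H ψ = 0 →
        ψ ∈ Submodule.span ℂ (Set.range χ)) :
    ∀ ψ : E, Q (n_q + 1) ψ = ψ → H ψ = 0 → ψ = 0 := by
  intro ψ hQψ hHψ
  obtain ⟨c, hc, hrec⟩ := hrec
  set ω : ℂ := Complex.exp (2 * Real.pi * Complex.I / L)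
  have hω : IsPrimitiveRoot ω L := Complex.isPrimitiveRoot_exp L (NeZero.ne L)
  have hVa' : ∀ x y, V (a x y) = ω ^ (-(x.val : ℤ)) • a x (V y) := fun x y => by
    rw [← mul_apply_eq_comp, hVa, smul_apply, mul_apply_eq_comp,
      ← Complex.exp_two_pi_I_mul_div]
    push_cast; ring_nf
  have hχV' : ∀ j, V (χ j) = ω ^ d j • χ j := fun j => by
    rw [hχV, Complex.exp_two_pi_I_mul_div]
  have hdecomp : ψ = ∑ k ∈ range L, eigenProjection ω L V k ψ := by
    rw [← _root_.sum_apply, sum_eigenProjection hω, one_apply_eq_self]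
  rw [hdecomp]
  refine sum_eq_zero fun k _ => ?_
  set φ := eigenProjection ω L V k ψ
  have hQφ : Q (n_q + 1) φ = φ := by
    rw [← mul_apply_eq_comp, (Commute.eigenProjection (hVQ _).symm k).eq, mul_apply_eq_comp,
      hQψ]
  have hHφ : H φ = 0 := by
    rw [← mul_apply_eq_comp, (Commute.eigenProjection hVH.symm k).eq, mul_apply_eq_comp, hHψ,
      map_zero]
  have hVφ : V φ = ω ^ (k : ℤ) • φ := by
    rw [zpow_natCast, ← mul_apply_eq_comp, mul_eigenProjection hω.pow_eq_one hVL]; rfl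
  have hsector : ∀ x, Q n_q (a x φ) = a x φ := fun x => by
    simpa only [mul_apply_eq_comp, hQφ] using congr($(hQa n_q x) φ).symm
  have hkernel : ∀ x, H (a x φ) = 0 :=
    apply_eq_zero_of_isPositive_recursion a (hQsa _) (hHQ n_q) (hpos n_q le_rfl) hc
      (hrec n_q le_rfl) hQφ hHφ hsector
  have hsupp := apply_eq_zero_of_notMem_image (a := fun x => (a x : E →ₗ[ℂ] E)) hω hVa' hχV'
    hVφ fun x => hker _ (hsector x) (hkernel x)
  by_contra hφ
  have hnum : (∑ x, adjoint (a x) * a x) φ = ((n_q + 1 : ℕ) : ℂ) • φ := by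
    rw [← hQφ, ← mul_apply_eq_comp, hNQ, smul_apply]
  have hpauli := le_card_of_apply_eq_zero_of_notMem a (fun x => by simpa using hcar x x) hnum hφ
    _ hsupp
  have hcard : #(univ.image fun j => ((k : ℤ) : ZMod L) - d j) ≤ q :=
    card_image_le.trans_eq (card_fin q)
  have hq : q ≤ n_q := by nlinarith
  omega

/-- **Incompressibility at maximal filling (fermionic case).**
On the fermionic Fock space over `ℓ²(ℤ/Lℤ)`, let `H` conserve particle number, satisfy
`H_n ≥ 0` for `n ≥ n_q`, the recursion `H_{n+1} ≥ c ∑ₓ a x† H_n (a x)` for some `c > 0`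
and all `n ≥ n_q`, and commute with the dipole unitary `V` (with `V^L = 1` and
`V (a x) = e^{−2πi x/L} (a x) V`).  Assume `ker H_{n_q}` is spanned by an orthonormal family
`χ j` (`j < q`) of `V`-eigenvectors with `q` distinct eigenvalues among the `L`-th roots of
unity (times a fixed phase).  If `L ≥ q²/p` (so `n_q = pL/q ≥ q`), then
`ker H_{n_q+1} = {0}`. -/
theorem incompressibility_fermions
    {E : Type*} [NormedAddCommGroup E] [InnerProductSpace ℂ E] [CompleteSpace E]
    (L p q n_q : ℕ) [NeZero L] (hp : 1 ≤ p) (hpq : p < q) (hcop : Nat.Coprime p q)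
    (hnq : q * n_q = p * L) (hLlarge : q ^ 2 ≤ p * L)
    (a : ZMod L → E →L[ℂ] E)
    -- canonical anticommutation relations (fermions)
    (hcar : ∀ x y, a x * adjoint (a y) + adjoint (a y) * a x
        = if x = y then (1 : E →L[ℂ] E) else 0)
    (hcar' : ∀ x y, a x * a y + a y * a x = 0)
    -- particle-number sector projections
    (Q : ℕ → E →L[ℂ] E)
    (hQproj : ∀ k, IsIdempotentElem (Q k)) (hQsa : ∀ k, IsSelfAdjoint (Q k))
    (hNQ : ∀ k, (∑ x, adjoint (a x) * a x) * Q k = (k : ℂ) • Q k)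
    (hQa : ∀ k x, a x * Q (k + 1) = Q k * (a x * Q (k + 1)))
    -- the Hamiltonian: particle-number conserving, `H_n ≥ 0` for `n ≥ n_q`, recursion
    (H : E →L[ℂ] E) (hsaH : IsSelfAdjoint H) (hHQ : ∀ k, H * Q k = Q k * H)
    (hpos : ∀ n, n_q ≤ n → (Q n * H * Q n).IsPositive)
    (hrec : ∃ c : ℝ, 0 < c ∧ ∀ n, n_q ≤ n →
        (Q (n + 1) * (H - (c : ℂ) • ∑ x, adjoint (a x) * (H * Q n) * a x)
          * Q (n + 1)).IsPositive)
    -- the dipole unitary `V`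
    (V : E →L[ℂ] E) (hV₁ : adjoint V * V = 1) (hV₂ : V * adjoint V = 1)
    (hVL : V ^ L = 1) (hVH : V * H = H * V) (hVQ : ∀ k, V * Q k = Q k * V)
    (hVa : ∀ x : ZMod L,
        V * a x = Complex.exp (-(2 * (Real.pi : ℂ) * Complex.I * (x.val : ℂ) / L)) •
          (a x * V))
    -- the ground-state space at filling `n_q`
    (χ : Fin q → E) (hON : Orthonormal ℂ χ)
    (hχQ : ∀ j, Q n_q (χ j) = χ j) (hχH : ∀ j, H (χ j) = 0)
    (d : Fin q → ℤ)
    (hχV : ∀ j, V (χ j)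
        = Complex.exp (2 * (Real.pi : ℂ) * Complex.I * (d j : ℂ) / L) • χ j)
    (hdist : Function.Injective fun j => ((d j : ZMod L)))
    (hker : ∀ ψ : E, Q n_q ψ = ψ → H ψ = 0 →
        ψ ∈ Submodule.span ℂ (Set.range χ)) :
    ∀ ψ : E, Q (n_q + 1) ψ = ψ → H ψ = 0 → ψ = 0 :=
  incompressibility_fermions_general L p q n_q hnq hLlarge a hcar Q hQsa hNQ hQa H hHQ hpos hrec V
    hVL hVH hVQ hVa χ d hχV hker
end
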